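/- Let H ∈ (0,1/2), T > 0, and t ∈ (0,T]. Suppose constants γ ∈ (0,H) and β ∈ (0,1/2) satisfy 0 < β < γ and 4H − 6γ − 2β − 1 > −1 together with 2H − 4γ − 2β > 0 and 2H − 2γ > 0. Then ∫_0^t ∫_0^θ ((θ−θ')/(θθ'))^{2γ} θ^{2H−1−2γ} (t−θ)^{2H−1−2γ} |θ−θ'|^{−1−2β} dθ' dθ ≤ C · (Γ(2H−2γ)Γ(2H−4γ−2β)/Γ(4H−6γ−2β)) · t^{4H−6γ−2β−1} < ∞ for some finite constant C = C(H,γ,β) > 0. -/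

import Mathlib

/-!
For `0 < θ' < θ` the integrand factors as
`θ ^ (2H-1-4γ) (t-θ) ^ (2H-1-2γ) · θ' ^ (-2γ) (θ-θ') ^ (2γ-2β-1)`, so both integrals are Beta
integrals `∫₀ᶜ x ^ (a-1) (c-x) ^ (b-1) dx = B(a, b) c ^ (a+b-1)`: the inner one gives
`B(1-2γ, 2γ-2β) θ ^ (-2β)` and the outer one `B(2H-4γ-2β, 2H-2γ) t ^ (4H-6γ-2β-1)`.
Hence the bound holds with equality for `C = B(1-2γ, 2γ-2β)`.
-/

open MeasureTheory Set ProbabilityTheory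

theorem ofReal_beta {a b : ℝ} (ha : 0 < a) (hb : 0 < b) :
    (beta a b : ℂ) = Complex.betaIntegral a b := by
  rw [Complex.betaIntegral_eq_Gamma_mul_div _ _ (by simpa) (by simpa), beta,
    ← Complex.ofReal_add, Complex.Gamma_ofReal, Complex.Gamma_ofReal, Complex.Gamma_ofReal]
  push_cast
  rfl

theorem intervalIntegral_rpow_mul_sub_rpow {a b c : ℝ} (ha : 0 < a) (hb : 0 < b) (hc : 0 < c) :
    ∫ x in 0..c, x ^ (a - 1) * (c - x) ^ (b - 1) = beta a b * c ^ (a + b - 1) := by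
  apply Complex.ofReal_injective
  rw [← intervalIntegral.integral_ofReal, Complex.ofReal_mul, ofReal_beta ha hb,
    Complex.ofReal_cpow hc.le, mul_comm]
  push_cast
  rw [← Complex.betaIntegral_scaled _ _ hc]
  refine intervalIntegral.integral_congr fun x hx ↦ ?_
  rw [uIcc_of_le hc.le] at hx
  rw [Complex.ofReal_cpow hx.1, Complex.ofReal_cpow (sub_nonneg.2 hx.2)]
  push_cast
  rfl

theorem lintegral_Ioo_rpow_mul_sub_rpow {a b c : ℝ} (ha : 0 < a) (hb : 0 < b) (hc : 0 < c) :
    ∫⁻ x in Ioo 0 c, ENNReal.ofReal (x ^ (a - 1) * (c - x) ^ (b - 1)) =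
      ENNReal.ofReal (beta a b * c ^ (a + b - 1)) := by
  have hval := intervalIntegral_rpow_mul_sub_rpow ha hb hc
  -- a non-integrable function would have interval integral `0`
  have hint : IntervalIntegrable (fun x ↦ x ^ (a - 1) * (c - x) ^ (b - 1)) volume 0 c :=
    intervalIntegral.intervalIntegrable_of_integral_ne_zero
      (by rw [hval]; exact (mul_pos (beta_pos ha hb) (Real.rpow_pos_of_pos hc _)).ne')
  rw [← ofReal_integral_eq_lintegral_ofReal, ← integral_Ioc_eq_integral_Ioo,
    ← intervalIntegral.integral_of_le hc.le, hval]
  · exact (intervalIntegrable_iff_integrableOn_Ioo_of_le hc.le).1 hint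
  · filter_upwards [ae_restrict_mem measurableSet_Ioo] with x hx
    exact mul_nonneg (Real.rpow_nonneg hx.1.le _) (Real.rpow_nonneg (sub_pos.2 hx.2).le _)

theorem lintegral_Ioo_div_rpow_mul_abs_sub_rpow {γ β θ : ℝ} (hγ : γ < 1 / 2) (hβγ : β < γ)
    (hθ : 0 < θ) :
    ∫⁻ x in Ioo 0 θ,
        ENNReal.ofReal (((θ - x) / (θ * x)) ^ (2 * γ) * |θ - x| ^ (-(1 + 2 * β))) =
      ENNReal.ofReal (θ ^ (-(2 * γ)) * beta (1 - 2 * γ) (2 * γ - 2 * β) * θ ^ (-(2 * β))) := by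
  have hpt : ∀ x ∈ Ioo 0 θ, ((θ - x) / (θ * x)) ^ (2 * γ) * |θ - x| ^ (-(1 + 2 * β)) =
      θ ^ (-(2 * γ)) * (x ^ ((1 - 2 * γ) - 1) * (θ - x) ^ ((2 * γ - 2 * β) - 1)) := by
    rintro x ⟨hx, hxθ⟩
    have hθx : 0 < θ - x := sub_pos.2 hxθ
    rw [abs_of_pos hθx, Real.div_rpow hθx.le (by positivity), Real.mul_rpow hθ.le hx.le,
      Real.rpow_neg hθ.le, div_eq_mul_inv, mul_inv, show (1 - 2 * γ) - 1 = -(2 * γ) by ring,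
      Real.rpow_neg hx.le, show 2 * γ - 2 * β - 1 = 2 * γ + -(1 + 2 * β) by ring,
      Real.rpow_add hθx]
    ring
  rw [setLIntegral_congr_fun measurableSet_Ioo (fun x hx ↦ by rw [hpt x hx])]
  simp_rw [ENNReal.ofReal_mul (Real.rpow_nonneg hθ.le (-(2 * γ)))]
  rw [lintegral_const_mul' _ _ ENNReal.ofReal_ne_top,
    lintegral_Ioo_rpow_mul_sub_rpow (by linarith) (by linarith) hθ,
    ← ENNReal.ofReal_mul (Real.rpow_nonneg hθ.le _), mul_assoc,
    show 1 - 2 * γ + (2 * γ - 2 * β) - 1 = -(2 * β) by ring]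

theorem double_integral_eq_beta_mul_beta {H t γ β : ℝ} (hγ : γ < 1 / 2) (hβγ : β < γ)
    (h2 : 0 < 2 * H - 4 * γ - 2 * β) (h3 : 0 < 2 * H - 2 * γ) (ht : 0 < t) :
    ∫⁻ θ in Ioo 0 t, ∫⁻ θ' in Ioo 0 θ,
        ENNReal.ofReal (((θ - θ') / (θ * θ')) ^ (2 * γ) * θ ^ (2 * H - 1 - 2 * γ) *
          (t - θ) ^ (2 * H - 1 - 2 * γ) * |θ - θ'| ^ (-(1 + 2 * β))) =
      ENNReal.ofReal (beta (1 - 2 * γ) (2 * γ - 2 * β) *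
        beta (2 * H - 4 * γ - 2 * β) (2 * H - 2 * γ) * t ^ (4 * H - 6 * γ - 2 * β - 1)) := by
  set B := beta (1 - 2 * γ) (2 * γ - 2 * β)
  have hB : 0 ≤ B := (beta_pos (by linarith) (by linarith)).le
  have hinner : ∀ θ ∈ Ioo 0 t, ∫⁻ θ' in Ioo 0 θ,
      ENNReal.ofReal (((θ - θ') / (θ * θ')) ^ (2 * γ) * θ ^ (2 * H - 1 - 2 * γ) *
        (t - θ) ^ (2 * H - 1 - 2 * γ) * |θ - θ'| ^ (-(1 + 2 * β))) =
      ENNReal.ofReal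
        (B * (θ ^ ((2 * H - 4 * γ - 2 * β) - 1) * (t - θ) ^ ((2 * H - 2 * γ) - 1))) := by
    rintro θ ⟨hθ, hθt⟩
    set w := θ ^ (2 * H - 1 - 2 * γ) * (t - θ) ^ (2 * H - 1 - 2 * γ)
    have hw : 0 ≤ w := mul_nonneg (Real.rpow_nonneg hθ.le _) (Real.rpow_nonneg (by linarith) _)
    have hsplit : ∀ θ' : ℝ, ((θ - θ') / (θ * θ')) ^ (2 * γ) * θ ^ (2 * H - 1 - 2 * γ) *
        (t - θ) ^ (2 * H - 1 - 2 * γ) * |θ - θ'| ^ (-(1 + 2 * β)) =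
        w * (((θ - θ') / (θ * θ')) ^ (2 * γ) * |θ - θ'| ^ (-(1 + 2 * β))) := fun _ ↦ by ring
    simp_rw [hsplit, ENNReal.ofReal_mul hw]
    rw [lintegral_const_mul' _ _ ENNReal.ofReal_ne_top,
      lintegral_Ioo_div_rpow_mul_abs_sub_rpow hγ hβγ hθ, ← ENNReal.ofReal_mul hw]
    congr 1
    rw [show 2 * H - 4 * γ - 2 * β - 1 = (2 * H - 1 - 2 * γ) + -(2 * γ) + -(2 * β) by ring,
      Real.rpow_add hθ, Real.rpow_add hθ, show 2 * H - 2 * γ - 1 = 2 * H - 1 - 2 * γ by ring]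
    ring
  rw [setLIntegral_congr_fun measurableSet_Ioo hinner]
  simp_rw [ENNReal.ofReal_mul hB]
  rw [lintegral_const_mul' _ _ ENNReal.ofReal_ne_top, lintegral_Ioo_rpow_mul_sub_rpow h2 h3 ht,
    ← ENNReal.ofReal_mul hB, mul_assoc,
    show 2 * H - 4 * γ - 2 * β + (2 * H - 2 * γ) - 1 = 4 * H - 6 * γ - 2 * β - 1 by ring]

theorem double_integral_bound_general (H T t γ β : ℝ) (hH : H ∈ Set.Ioo (0 : ℝ) (1 / 2))
    (ht : t ∈ Set.Ioc 0 T) (hγ : γ ∈ Set.Ioo 0 H) (hβγ : β < γ)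
    (h2 : 2 * H - 4 * γ - 2 * β > 0) (h3 : 2 * H - 2 * γ > 0) :
    ∃ C > (0 : ℝ),
      (∫⁻ θ in Set.Ioo (0 : ℝ) t, ∫⁻ θ' in Set.Ioo (0 : ℝ) θ,
        ENNReal.ofReal (((θ - θ') / (θ * θ')) ^ (2 * γ) * θ ^ (2 * H - 1 - 2 * γ) *
          (t - θ) ^ (2 * H - 1 - 2 * γ) * |θ - θ'| ^ (-(1 + 2 * β)))) ≤
      ENNReal.ofReal (C *
        (Real.Gamma (2 * H - 2 * γ) * Real.Gamma (2 * H - 4 * γ - 2 * β) /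
          Real.Gamma (4 * H - 6 * γ - 2 * β)) *
        t ^ (4 * H - 6 * γ - 2 * β - 1)) := by
  have hγ2 : γ < 1 / 2 := hγ.2.trans hH.2
  refine ⟨beta (1 - 2 * γ) (2 * γ - 2 * β), beta_pos (by linarith) (by linarith), le_of_eq ?_⟩
  rw [double_integral_eq_beta_mul_beta hγ2 hβγ h2 h3 ht.1]
  congr 3
  rw [beta, mul_comm (Real.Gamma _)]
  ring_nf

/-- Double-integral estimate: under the stated exponent conditions,
`∫_0^t ∫_0^θ ((θ−θ')/(θθ'))^{2γ} θ^{2H−1−2γ} (t−θ)^{2H−1−2γ} |θ−θ'|^{−1−2β} dθ' dθ`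
is bounded by `C Γ(2H−2γ)Γ(2H−4γ−2β)/Γ(4H−6γ−2β) · t^{4H−6γ−2β−1} < ∞`. -/
theorem double_integral_bound (H T t γ β : ℝ) (hH : H ∈ Set.Ioo (0 : ℝ) (1 / 2))
    (hT : 0 < T) (ht : t ∈ Set.Ioc 0 T) (hγ : γ ∈ Set.Ioo 0 H)
    (hβ : β ∈ Set.Ioo (0 : ℝ) (1 / 2)) (hβγ : β < γ)
    (h1 : 4 * H - 6 * γ - 2 * β - 1 > -1) (h2 : 2 * H - 4 * γ - 2 * β > 0)
    (h3 : 2 * H - 2 * γ > 0) :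
    ∃ C > (0 : ℝ),
      (∫⁻ θ in Set.Ioo (0 : ℝ) t, ∫⁻ θ' in Set.Ioo (0 : ℝ) θ,
        ENNReal.ofReal (((θ - θ') / (θ * θ')) ^ (2 * γ) * θ ^ (2 * H - 1 - 2 * γ) *
          (t - θ) ^ (2 * H - 1 - 2 * γ) * |θ - θ'| ^ (-(1 + 2 * β)))) ≤
      ENNReal.ofReal (C *
        (Real.Gamma (2 * H - 2 * γ) * Real.Gamma (2 * H - 4 * γ - 2 * β) /
          Real.Gamma (4 * H - 6 * γ - 2 * β)) *
        t ^ (4 * H - 6 * γ - 2 * β - 1)) :=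
  double_integral_bound_general H T t γ β hH ht hγ hβγ h2 h3
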